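/- arXiv:1504.02984 — 3 statements merged into one kernel-verified Lean document; each statement's English description precedes it below -/
import Mathlib

section
/- In a free product G₁ * G₂, every element of finite order is conjugate to an element of one of the factors G₁ or G₂. -/
open Monoid CoprodI

section Aux
variable {ι : Type*} [DecidableEq ι] {G : ι → Type*} [∀ i, Group (G i)]
  [∀ i, DecidableEq (G i)]

theorem prod_inj : Function.Injective (CoprodI.Word.prod : CoprodI.Word G → CoprodI G) :=
  fun a b hab => CoprodI.Word.equiv.symm.injective hab

theorem neword_prod_ne_one {i j} (w : CoprodI.NeWord G i j) : w.prod ≠ 1 := by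
  intro h
  have : w.toWord = CoprodI.Word.empty := prod_inj (by simpa [CoprodI.NeWord.prod] using h)
  have h2 := w.toList_ne_nil
  rw [show w.toList = w.toWord.toList from rfl, this] at h2
  simp [CoprodI.Word.empty] at h2

theorem pow_neword {i j} (w : CoprodI.NeWord G i j) (hij : i ≠ j) (n : ℕ) :
    ∃ w' : CoprodI.NeWord G i j, w'.prod = w.prod ^ (n + 1) := by
  induction n with
  | zero => exact ⟨w, by simp⟩
  | succ n ih =>
    obtain ⟨w', hw'⟩ := ih
    exact ⟨.append w (Ne.symm hij) w', by
      rw [CoprodI.NeWord.append_prod, hw']; group⟩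

theorem not_finord {i j} (w : CoprodI.NeWord G i j) (hij : i ≠ j) :
    ¬ IsOfFinOrder w.prod := by
  intro h
  obtain ⟨n, hn, hpow⟩ := isOfFinOrder_iff_pow_eq_one.mp h
  obtain ⟨m, rfl⟩ := Nat.exists_eq_add_of_lt hn
  obtain ⟨w', hw'⟩ := pow_neword w hij m
  exact neword_prod_ne_one w' (by rw [hw', Nat.zero_add] at *; exact hpow)

theorem key : ∀ (n : ℕ) (g : CoprodI G), (CoprodI.Word.equiv g).toList.length ≤ n →
    IsOfFinOrder g → g ≠ 1 →
    ∃ (h : CoprodI G) (i : ι) (a : G i), g = h * CoprodI.of a * h⁻¹ := by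
  intro n
  induction n with
  | zero =>
    intro g hlen _ hne
    exfalso
    apply hne
    have hw : CoprodI.Word.prod (CoprodI.Word.equiv g) = g := CoprodI.Word.equiv.symm_apply_apply g
    rw [Nat.le_zero, List.length_eq_zero_iff] at hlen
    rw [← hw]
    simp [CoprodI.Word.prod, hlen]
  | succ n ih =>
    intro g hlen hfin hne
    have hw : CoprodI.Word.prod (CoprodI.Word.equiv g) = g := CoprodI.Word.equiv.symm_apply_apply g
    set w := CoprodI.Word.equiv g with hwdef
    rcases hL : w.toList with _ | ⟨⟨i, m⟩, L'⟩
    · exfalso; apply hne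
      rw [← hw]; simp [CoprodI.Word.prod, hL]
    rcases L' with _ | ⟨x, rest⟩
    · -- singleton
      refine ⟨1, i, m, ?_⟩
      rw [← hw]
      simp [CoprodI.Word.prod, hL]
    · -- length ≥ 2
      have hxr : (x :: rest) ≠ [] := by simp
      rcases hlast : (x :: rest).getLast hxr with ⟨j, m'⟩
      set Ld := (x :: rest).dropLast with hLd
      have hsplit : w.toList = ⟨i, m⟩ :: (Ld ++ [⟨j, m'⟩]) := by
        rw [hL, ← hlast, hLd, List.dropLast_append_getLast hxr]
      by_cases hij : i = j
      · subst hij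
        -- cyclic reduction
        set g' : CoprodI G := (CoprodI.of m)⁻¹ * g * CoprodI.of m with hg'def
        have hgconj : g = CoprodI.of m * g' * (CoprodI.of m)⁻¹ := by
          rw [hg'def]; group
        have hprodsplit : g =
            CoprodI.of m * ((List.prod (Ld.map fun l => CoprodI.of l.snd)) * CoprodI.of m') := by
          rw [← hw]
          simp [CoprodI.Word.prod, hsplit, mul_assoc]
        have hg' : g' = (List.prod (Ld.map fun l => CoprodI.of l.snd)) * CoprodI.of (m' * m) := by
          rw [hg'def, hprodsplit, map_mul]
          group
        have hchain := w.chain_ne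
        rw [hsplit] at hchain
        have hchain2 := hchain.tail
        simp only [List.tail_cons] at hchain2
        rw [List.isChain_append] at hchain2
        have hnone := w.ne_one
        rw [hsplit] at hnone
        have hnoneLd : ∀ l ∈ Ld, l.snd ≠ 1 := fun l hl =>
          hnone l (by simp [hl])
        have hlenw : w.toList.length = rest.length + 2 := by simp [hL]
        have hLdlen : Ld.length = rest.length := by simp [hLd]
        have hrest : rest.length + 1 ≤ n := by omega
        -- find a word for g'
        have hex : ∃ w₂ : CoprodI.Word G, w₂.prod = g' ∧ w₂.toList.length ≤ n := by
          by_cases hone : m' * m = 1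
          · refine ⟨⟨Ld, hnoneLd, hchain2.1⟩, ?_, by simp [hLdlen]; omega⟩
            rw [hg', hone, map_one, mul_one]
            rfl
          · refine ⟨⟨Ld ++ [⟨i, m' * m⟩], ?_, ?_⟩, ?_, by simp [hLdlen]; omega⟩
            · intro l hl
              rcases List.mem_append.mp hl with h | h
              · exact hnoneLd l h
              · simp at h; subst h; exact hone
            · rw [List.isChain_append]
              refine ⟨hchain2.1, List.isChain_singleton _, ?_⟩
              intro y hy z hz
              simp at hz
              subst hz
              exact hchain2.2.2 y hy ⟨i, m'⟩ (by simp)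
            · show List.prod _ = g'
              rw [List.map_append, List.prod_append, hg']
              simp
        obtain ⟨w₂, hw₂prod, hw₂len⟩ := hex
        have hfin' : IsOfFinOrder g' := by
          obtain ⟨k, hk, hgk⟩ := isOfFinOrder_iff_pow_eq_one.mp hfin
          refine isOfFinOrder_iff_pow_eq_one.mpr ⟨k, hk, ?_⟩
          have hrw : g' = (CoprodI.of m)⁻¹ * g * ((CoprodI.of m)⁻¹)⁻¹ := by
            rw [hg'def]; group
          rw [hrw, conj_pow, hgk]
          group
        have hne2 : g' ≠ 1 := by
          intro h1
          apply hne
          rw [hgconj, h1]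
          group
        have hlen' : (CoprodI.Word.equiv g').toList.length ≤ n := by
          have heq : CoprodI.Word.equiv g' = w₂ := by
            rw [← hw₂prod]
            exact CoprodI.Word.equiv.apply_symm_apply w₂
          rw [heq]; exact hw₂len
        obtain ⟨h, k, a, ha⟩ := ih g' hlen' hfin' hne2
        refine ⟨CoprodI.of m * h, k, a, ?_⟩
        rw [hgconj, ha]
        group
      · -- head index ≠ last index : infinite order, contradiction
        exfalso
        have hwne : w ≠ CoprodI.Word.empty := by
          intro h
          rw [h] at hL
          simp [CoprodI.Word.empty] at hL
        obtain ⟨i', j', w', hw'⟩ := CoprodI.NeWord.of_word w hwne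
        have htl : w'.toList = w.toList := by rw [← hw']; rfl
        have hhead : w'.toList.head? = some ⟨i', w'.head⟩ := w'.toList_head?
        have hlast' : w'.toList.getLast? = some ⟨j', w'.last⟩ := w'.toList_getLast?
        rw [htl, hL] at hhead
        simp at hhead
        have hii : i' = i := hhead.1.symm
        rw [htl, hsplit, ← List.cons_append, List.getLast?_concat] at hlast'
        simp at hlast'
        have hjj : j' = j := hlast'.1.symm
        have hp : w'.prod = g := by
          rw [CoprodI.NeWord.prod, hw']; exact hw
        exact not_finord w' (by rw [hii, hjj]; exact hij) (hp ▸ hfin)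

end Aux

/-- In a free product `G₁ * G₂`, every element of finite order is conjugate to an
element of one of the factors `G₁` or `G₂`. -/
theorem stmt_0 {G₁ G₂ : Type*} [Group G₁] [Group G₂]
    (g : Monoid.Coprod G₁ G₂) (hg : IsOfFinOrder g) :
    ∃ h : Monoid.Coprod G₁ G₂,
      (∃ a : G₁, g = h * Monoid.Coprod.inl a * h⁻¹) ∨
      (∃ b : G₂, g = h * Monoid.Coprod.inr b * h⁻¹) := by
  classical
  by_cases h1 : g = 1
  · exact ⟨1, Or.inl ⟨1, by simp [h1]⟩⟩
  set G : Bool → Type _ := fun b => cond b (ULift.{max u_1 u_2} G₁) (ULift.{max u_1 u_2} G₂)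
    with hG
  letI : ∀ b, Group (G b) := fun b => match b with
    | true => (inferInstance : Group (ULift G₁))
    | false => (inferInstance : Group (ULift G₂))
  set F : Monoid.Coprod G₁ G₂ →* CoprodI G :=
    Monoid.Coprod.lift
      ((CoprodI.of (M := G) (i := true)).comp MulEquiv.ulift.symm.toMonoidHom)
      ((CoprodI.of (M := G) (i := false)).comp MulEquiv.ulift.symm.toMonoidHom)
    with hF
  set B : CoprodI G →* Monoid.Coprod G₁ G₂ :=
    CoprodI.lift (fun b => match b with
      | true => (Monoid.Coprod.inl : G₁ →* Monoid.Coprod G₁ G₂).comp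
          MulEquiv.ulift.toMonoidHom
      | false => (Monoid.Coprod.inr : G₂ →* Monoid.Coprod G₁ G₂).comp
          MulEquiv.ulift.toMonoidHom) with hB
  have hBF : ∀ x, B (F x) = x := by
    have hcomp : B.comp F = MonoidHom.id _ := by
      apply Monoid.Coprod.hom_ext
      · ext a
        show B (F (Monoid.Coprod.inl a)) = Monoid.Coprod.inl a
        rw [hF, Monoid.Coprod.lift_apply_inl, MonoidHom.comp_apply, hB, CoprodI.lift_of]
        rfl
      · ext a
        show B (F (Monoid.Coprod.inr a)) = Monoid.Coprod.inr a
        rw [hF, Monoid.Coprod.lift_apply_inr, MonoidHom.comp_apply, hB, CoprodI.lift_of]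
        rfl
    intro x
    exact DFunLike.congr_fun hcomp x
  have hfinF : IsOfFinOrder (F g) := by
    obtain ⟨k, hk, hgk⟩ := isOfFinOrder_iff_pow_eq_one.mp hg
    exact isOfFinOrder_iff_pow_eq_one.mpr ⟨k, hk, by rw [← map_pow, hgk, map_one]⟩
  have hFne : F g ≠ 1 := by
    intro h
    exact h1 (by rw [← hBF g, h, map_one])
  obtain ⟨h, i, a, ha⟩ := key _ (F g) le_rfl hfinF hFne
  have hg' : g = B h * B (CoprodI.of a) * (B h)⁻¹ := by
    rw [← hBF g, ha]
    simp [map_mul]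
  refine ⟨B h, ?_⟩
  cases i
  · exact Or.inr ⟨MulEquiv.ulift a, by rw [hg']; rw [hB, CoprodI.lift_of]; rfl⟩
  · exact Or.inl ⟨MulEquiv.ulift a, by rw [hg']; rw [hB, CoprodI.lift_of]; rfl⟩
end

section
/- If c and d are involutions in a free product G₁ * G₂, then the product cd either has finite order or is conjugate to an element of the form c₁ z c₂ z⁻¹ where c₁ and c₂ are involutions lying in G₁ or G₂ and z ∈ G₁ * G₂. -/
/-!
An element of finite order in a free product is conjugate into a factor. If its reduced word
begins and ends in different factors, its powers are spelled by the concatenated words and are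
never trivial; otherwise conjugating by the last letter merges it into the first and shortens the
word. Hence `c = h a h⁻¹` and `d = k b k⁻¹` with involutions `a`, `b` of the factors, and
`c d = h (a z b z⁻¹) h⁻¹` with `z = h⁻¹ k`.
-/

namespace Monoid.CoprodI

variable {ι : Type*}

section Monoid

variable {M : ι → Type*} [∀ i, Monoid (M i)]

namespace NeWord

theorem prod_ne_one {i j : ι} (w : NeWord M i j) : w.prod ≠ 1 := by
  classical
  intro h
  have : w.toWord = Word.empty := Word.equiv.symm.injective h
  exact w.toList_ne_nil (congrArg Word.toList this)

theorem exists_prod_eq_pow {i j : ι} (w : NeWord M i j) (hji : j ≠ i) (n : ℕ) :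
    ∃ w' : NeWord M i j, w'.prod = w.prod ^ (n + 1) := by
  induction n with
  | zero => exact ⟨w, (pow_one _).symm⟩
  | succ n ih =>
    obtain ⟨w', hw'⟩ := ih
    exact ⟨w'.append hji w, by rw [append_prod, hw', ← pow_succ]⟩

theorem not_isOfFinOrder_prod {i j : ι} (w : NeWord M i j) (hij : i ≠ j) :
    ¬IsOfFinOrder w.prod := by
  rw [isOfFinOrder_iff_pow_eq_one]
  rintro ⟨n, hn, hpow⟩
  obtain ⟨w', hw'⟩ := w.exists_prod_eq_pow hij.symm (n - 1)
  rw [Nat.sub_add_cancel hn, hpow] at hw'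
  exact w'.prod_ne_one hw'

end NeWord

theorem Word.not_isOfFinOrder_prod (w : Word M)
    (h : w.fstIdx ≠ w.toList.getLast?.map Sigma.fst) : ¬IsOfFinOrder w.prod := by
  have hw : w ≠ Word.empty := by
    rintro rfl
    exact h rfl
  obtain ⟨i, j, w', rfl⟩ := NeWord.of_word w hw
  refine w'.not_isOfFinOrder_prod fun hij => h ?_
  simp [Word.fstIdx, NeWord.toWord, hij]

variable [DecidableEq ι] [∀ i, DecidableEq (M i)]

def syllableLength (x : CoprodI M) : ℕ :=
  (Word.equiv x).toList.length

theorem syllableLength_prod (w : Word M) : syllableLength w.prod = w.toList.length := by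
  rw [syllableLength, show Word.equiv w.prod = w from Word.equiv.apply_symm_apply w]

theorem syllableLength_of_mul_prod_le {i : ι} (g : M i) (w : Word M) (hw : w.fstIdx ≠ some i) :
    syllableLength (of g * w.prod) ≤ w.toList.length + 1 := by
  by_cases hg : g = 1
  · simp [hg, syllableLength_prod]
  · rw [← Word.prod_cons i g w hg hw, syllableLength_prod]
    rfl

end Monoid

section Group

variable {G : ι → Type*} [∀ i, Group (G i)]

theorem syllableLength_conj_lt [DecidableEq ι] [∀ i, DecidableEq (G i)] {i : ι} (w : Word G)
    (a b : G i) (l : List (Σ i, G i)) (hw : w.toList = ⟨i, a⟩ :: (l ++ [⟨i, b⟩])) :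
    syllableLength (of b * w.prod * (of b)⁻¹) < w.toList.length := by
  have hchain := hw ▸ w.chain_ne
  let m : Word G := ⟨l, fun p hp => w.ne_one p (by simp [hw, hp]),
    hchain.infix ⟨[⟨i, a⟩], [⟨i, b⟩], rfl⟩⟩
  have hm : m.fstIdx ≠ some i := by
    rw [Word.fstIdx_ne_iff]
    intro p hp
    cases l with
    | nil => simp [m] at hp
    | cons q l =>
      obtain rfl : q = p := by simpa [m] using hp
      exact (List.isChain_cons_cons.1 hchain).1
  have hprod : w.prod = of a * m.prod * of b := by
    simp [Word.prod, hw, m, mul_assoc]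
  calc syllableLength (of b * w.prod * (of b)⁻¹) = syllableLength (of (b * a) * m.prod) := by
        rw [hprod, map_mul]; group
    _ ≤ l.length + 1 := syllableLength_of_mul_prod_le _ m hm
    _ < w.toList.length := by simp [hw]

theorem exists_isConj_of_of_isOfFinOrder {x : CoprodI G} (hx : IsOfFinOrder x) (hx1 : x ≠ 1) :
    ∃ (i : ι) (g : G i), IsConj x (of g) := by
  classical
  induction hn : syllableLength x using Nat.strong_induction_on generalizing x with
  | _ n ih =>
  obtain ⟨w, rfl⟩ : ∃ w : Word G, w.prod = x := ⟨Word.equiv x, Word.equiv.symm_apply_apply x⟩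
  rw [syllableLength_prod] at hn
  rcases hL : w.toList with _ | ⟨⟨i, a⟩, t⟩
  · exact absurd (by simp [Word.prod, hL]) hx1
  rcases t.eq_nil_or_concat' with rfl | ⟨l, ⟨j, b⟩, rfl⟩
  · have ha : w.prod = of a := by simp [Word.prod, hL]
    exact ⟨i, a, ha ▸ IsConj.refl _⟩
  obtain rfl : j = i := by
    by_contra hji
    refine w.not_isOfFinOrder_prod ?_ hx
    simp [Word.fstIdx, hL, List.getLast?_cons, List.getLast?_append, Ne.symm hji]
  have hconj : IsConj w.prod (of b * w.prod * (of b)⁻¹) := isConj_iff.2 ⟨of b, rfl⟩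
  obtain ⟨k, g, hg⟩ := ih _ (hn ▸ syllableLength_conj_lt w a b l hL) (hconj.isOfFinOrder hx)
    (fun h => hx1 (isConj_one_left.1 (h ▸ hconj))) rfl
  exact ⟨k, g, hconj.trans hg⟩

end Group

end Monoid.CoprodI

theorem IsConj.sq_eq_one_and_ne_one_of_injective {α β : Type*} [Group α] [Group β] {f : α →* β}
    (hf : Function.Injective f) {c : β} {x : α} (h : IsConj c (f x)) (hc : c ^ 2 = 1)
    (hc1 : c ≠ 1) : x ^ 2 = 1 ∧ x ≠ 1 := by
  refine ⟨(map_eq_one_iff f hf).1 ?_, ?_⟩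
  · rw [map_pow]
    exact isConj_one_right.1 (hc ▸ h.pow 2)
  · rintro rfl
    exact hc1 (isConj_one_left.1 (map_one f ▸ h))

namespace Monoid.Coprod

open Function

universe u v

variable {G₁ : Type u} {G₂ : Type v} [Group G₁] [Group G₂]

variable (G₁ G₂) in
/-- The factors of `G₁ ∗ G₂` as a `Bool`-indexed family, lifted to a common universe so that
`Monoid.CoprodI` applies. -/
def boolFamily : Bool → Type (max u v)
  | true => ULift.{v} G₁
  | false => ULift.{u} G₂

instance : ∀ b, Group (boolFamily G₁ G₂ b)
  | true => inferInstanceAs (Group (ULift G₁))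
  | false => inferInstanceAs (Group (ULift G₂))

def toCoprodI : G₁ ∗ G₂ →* CoprodI (boolFamily G₁ G₂) :=
  lift ((CoprodI.of (i := true)).comp MulEquiv.ulift.symm.toMonoidHom)
    ((CoprodI.of (i := false)).comp MulEquiv.ulift.symm.toMonoidHom)

def ofCoprodI : CoprodI (boolFamily G₁ G₂) →* G₁ ∗ G₂ :=
  CoprodI.lift fun
    | true => inl.comp MulEquiv.ulift.toMonoidHom
    | false => inr.comp MulEquiv.ulift.toMonoidHom

theorem ofCoprodI_comp_toCoprodI :
    (ofCoprodI (G₁ := G₁) (G₂ := G₂)).comp toCoprodI = .id _ := by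
  ext <;> simp [toCoprodI, ofCoprodI] <;> rfl

theorem leftInverse_ofCoprodI_toCoprodI :
    LeftInverse (ofCoprodI (G₁ := G₁) (G₂ := G₂)) toCoprodI :=
  DFunLike.congr_fun ofCoprodI_comp_toCoprodI

theorem exists_isConj_inl_or_inr_of_isOfFinOrder {c : G₁ ∗ G₂} (hc : IsOfFinOrder c)
    (hc1 : c ≠ 1) : (∃ x : G₁, IsConj c (inl x)) ∨ ∃ y : G₂, IsConj c (inr y) := by
  have hinj := leftInverse_ofCoprodI_toCoprodI.injective (f := toCoprodI (G₁ := G₁) (G₂ := G₂))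
  obtain ⟨i, g, hg⟩ := CoprodI.exists_isConj_of_of_isOfFinOrder (toCoprodI.isOfFinOrder hc)
    ((map_ne_one_iff _ hinj).2 hc1)
  have hconj := ofCoprodI.map_isConj hg
  rw [leftInverse_ofCoprodI_toCoprodI c] at hconj
  cases i
  · exact .inr ⟨g.down, hconj⟩
  · exact .inl ⟨g.down, hconj⟩

theorem exists_involution_conj_of_sq_eq_one {c : G₁ ∗ G₂} (hc : c ^ 2 = 1) (hc1 : c ≠ 1) :
    ∃ h a : G₁ ∗ G₂,
      ((∃ x : G₁, x ^ 2 = 1 ∧ x ≠ 1 ∧ a = inl x) ∨ (∃ y : G₂, y ^ 2 = 1 ∧ y ≠ 1 ∧ a = inr y)) ∧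
      c = h * a * h⁻¹ := by
  rcases exists_isConj_inl_or_inr_of_isOfFinOrder
    (isOfFinOrder_iff_pow_eq_one.2 ⟨2, two_pos, hc⟩) hc1 with ⟨x, hx⟩ | ⟨y, hy⟩
  · obtain ⟨h, rfl⟩ := isConj_iff.1 (isConj_comm.1 hx)
    obtain ⟨hx2, hx1⟩ := hx.sq_eq_one_and_ne_one_of_injective inl_injective hc hc1
    exact ⟨h, inl x, .inl ⟨x, hx2, hx1, rfl⟩, rfl⟩
  · obtain ⟨h, rfl⟩ := isConj_iff.1 (isConj_comm.1 hy)
    obtain ⟨hy2, hy1⟩ := hy.sq_eq_one_and_ne_one_of_injective inr_injective hc hc1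
    exact ⟨h, inr y, .inr ⟨y, hy2, hy1, rfl⟩, rfl⟩

end Monoid.Coprod

/-- If `c` and `d` are involutions in a free product `G₁ * G₂`, then `c * d` either has
finite order or is conjugate to an element of the form `c₁ * z * c₂ * z⁻¹`, where `c₁`
and `c₂` are involutions lying in `G₁` or `G₂`. -/
theorem stmt_1 {G₁ G₂ : Type*} [Group G₁] [Group G₂]
    (c d : Monoid.Coprod G₁ G₂)
    (hc : c ^ 2 = 1) (hc1 : c ≠ 1) (hd : d ^ 2 = 1) (hd1 : d ≠ 1) :
    IsOfFinOrder (c * d) ∨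
      ∃ (h z c₁ c₂ : Monoid.Coprod G₁ G₂),
        ((∃ x : G₁, x ^ 2 = 1 ∧ x ≠ 1 ∧ c₁ = Monoid.Coprod.inl x) ∨
          (∃ y : G₂, y ^ 2 = 1 ∧ y ≠ 1 ∧ c₁ = Monoid.Coprod.inr y)) ∧
        ((∃ x : G₁, x ^ 2 = 1 ∧ x ≠ 1 ∧ c₂ = Monoid.Coprod.inl x) ∨
          (∃ y : G₂, y ^ 2 = 1 ∧ y ≠ 1 ∧ c₂ = Monoid.Coprod.inr y)) ∧
        c * d = h * (c₁ * z * c₂ * z⁻¹) * h⁻¹ := by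
  right
  obtain ⟨h₁, a, ha, rfl⟩ := Monoid.Coprod.exists_involution_conj_of_sq_eq_one hc hc1
  obtain ⟨h₂, b, hb, rfl⟩ := Monoid.Coprod.exists_involution_conj_of_sq_eq_one hd hd1
  exact ⟨h₁, h₁⁻¹ * h₂, a, b, ha, hb, by group⟩
end

section
/- Every finitely generated residually finite group is Hopfian (Maltsev's theorem). -/
lemma finite_monoidHom_of_fg {G Q : Type*} [Group G] [Group Q] (hfg : Group.FG G)
    [Finite Q] : Finite (G →* Q) := by
  obtain ⟨S, hS⟩ := hfg.1
  refine Finite.of_injective (fun f : G →* Q => fun s : S => f s) ?_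
  intro f g h
  refine MonoidHom.eq_of_eqOn_dense hS fun x hx => ?_
  exact congrFun h ⟨x, hx⟩

/-- Maltsev's theorem: every finitely generated residually finite group is Hopfian. -/
theorem stmt_14 {G : Type u} [Group G] (hfg : Group.FG G)
    (hrf : ∀ g : G, g ≠ 1 → ∃ (Q : Type u) (_ : Group Q) (_ : Finite Q) (φ : G →* Q),
      φ g ≠ 1)
    (φ : G →* G) (hφ : Function.Surjective φ) :
    Function.Injective φ := by
  rw [injective_iff_map_eq_one]
  intro g hg
  by_contra hgne
  obtain ⟨Q, _, _, ψ, hψ⟩ := hrf g hgne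
  have hfin : Finite (G →* Q) := finite_monoidHom_of_fg hfg
  have hinj : Function.Injective (fun χ : G →* Q => χ.comp φ) := by
    intro χ₁ χ₂ h
    ext x
    obtain ⟨y, rfl⟩ := hφ x
    exact DFunLike.congr_fun h y
  obtain ⟨ψ', hψ'⟩ := (Finite.injective_iff_surjective.mp hinj) ψ
  apply hψ
  calc ψ g = (ψ'.comp φ) g := by simp only [← hψ']
    _ = ψ' (φ g) := rfl
    _ = 1 := by rw [hg, map_one]
end
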